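/- arXiv:2507.13216 — 2 statements merged into one kernel-verified Lean document; each statement's English description precedes it below -/
import Mathlib

section
/- Let λ ∈ ℂ^ν be non-resonant and let a = (a₁,…,a_ν) be a ν-tuple of formal power series in ν variables with ord a_i ≥ 2 for each i; set V_i = λ_i z_i + a_i. Then there exists a unique tangent-to-identity formal diffeomorphism h such that, for each i ∈ {1,…,ν}, Σ_{j=1}^{ν} λ_j z_j ∂h_i/∂z_j = V_i ∘ h as formal power series (i.e. h formally conjugates the vector field V = V_λ + a to its linear part V_λ). -/
/-!
Read coefficientwise, the conjugacy equation says `(n·λ - λᵢ) hᵢ,ₙ = [aᵢ ∘ h]ₙ` for every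
multi-index `n`. Since `ord aᵢ ≥ 2` and `h` has no constant term, the right side only depends on
the coefficients of `h` of degree `< |n|`: changing `h` in degrees `≥ |n|` changes each monomial
`∏ hⱼ^mⱼ` with `|m| ≥ 2` only in degrees `> |n|`. In degrees `≤ 1` both sides vanish for every
tangent-to-identity `h`, and in degrees `≥ 2` non-resonance makes `n·λ - λᵢ` invertible, so the
coefficients of `h` are determined by, and can be defined through, recursion on the degree.
-/

open MvPowerSeries Finsupp

noncomputable section

/-- Formal power series in ν variables over ℂ. -/
abbrev PS (ν : ℕ) := MvPowerSeries (Fin ν) ℂ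

/-- Total degree of a multi-index. -/
def totalDeg {ν : ℕ} (n : Fin ν →₀ ℕ) : ℕ := ∑ i, n i

/-- The finset of multi-indices of total degree at most `K`. -/
def degLE (ν K : ℕ) : Finset (Fin ν →₀ ℕ) :=
  (Finset.Iic (Finsupp.equivFunOnFinite.symm fun _ => K)).filter fun m => totalDeg m ≤ K

/-- The substitution (composition) operator `C_v : φ ↦ φ ∘ v`, for a ν-tuple `v` of formal
power series without constant term (each of total order ≥ 1). -/
def Csub {ν : ℕ} (v : Fin ν → PS ν) (φ : PS ν) : PS ν :=
  fun n => MvPowerSeries.coeff n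
    (∑ m ∈ degLE ν (totalDeg n), MvPowerSeries.coeff m φ • ∏ i, v i ^ m i)

/-- A ν-tuple of formal power series is a tangent-to-identity formal diffeomorphism if
`f i = z_i + a_i` with `ord a_i ≥ 2` for each `i`. -/
def TangentToId {ν : ℕ} (f : Fin ν → PS ν) : Prop :=
  ∀ i, 2 ≤ (f i - MvPowerSeries.X i).order

/-- Partial derivative `∂/∂z_i` of a formal power series. -/
def pd {ν : ℕ} (i : Fin ν) (φ : PS ν) : PS ν :=
  fun n => ((n i : ℂ) + 1) * MvPowerSeries.coeff (n + Finsupp.single i 1) φ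

/-- The linear vector field operator `L_λ = ∑ⱼ λⱼ zⱼ ∂/∂zⱼ`. -/
def Lop {ν : ℕ} (lam : Fin ν → ℂ) (φ : PS ν) : PS ν :=
  ∑ j, (lam j • MvPowerSeries.X j) * pd j φ

/-- `λ ∈ ℂ^ν` is non-resonant if `λᵢ ≠ m·λ` for all `i` and all `m ∈ ℕ^ν` with `|m| ≥ 2`. -/
def NonResonantL {ν : ℕ} (lam : Fin ν → ℂ) : Prop :=
  ∀ i : Fin ν, ∀ m : Fin ν → ℕ, 2 ≤ ∑ j, m j → lam i ≠ ∑ j, (m j : ℂ) * lam j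

namespace MvPowerSeries

variable {σ R : Type*} [CommRing R]

theorem le_order_mul_sub_mul {f f' g g' : MvPowerSeries σ R} {a b D : ℕ∞}
    (hf' : a ≤ f'.order) (hg : b ≤ g.order) (hff' : a + D ≤ (f - f').order)
    (hgg' : b + D ≤ (g - g').order) :
    a + b + D ≤ (f * g - f' * g').order := by
  have hsplit : f * g - f' * g' = (f - f') * g + f' * (g - g') := by ring
  rw [hsplit]
  refine le_trans (le_min ?_ ?_) min_order_le_add
  · calc a + b + D = (a + D) + b := by ring
      _ ≤ (f - f').order + g.order := add_le_add hff' hg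
      _ ≤ _ := le_order_mul
  · calc a + b + D = a + (b + D) := by ring
      _ ≤ f'.order + (g - g').order := add_le_add hf' hgg'
      _ ≤ _ := le_order_mul

theorem le_order_pow_sub_pow {f g : MvPowerSeries σ R} {a D : ℕ∞}
    (hf : a ≤ f.order) (hg : a ≤ g.order) (hfg : a + D ≤ (f - g).order) (k : ℕ) :
    k * a + D ≤ (f ^ k - g ^ k).order := by
  induction k with
  | zero => simp
  | succ k ih =>
    have hgk : k * a ≤ (g ^ k).order :=
      calc (k : ℕ∞) * a ≤ k • g.order := by rw [nsmul_eq_mul]; gcongr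
        _ ≤ _ := le_order_pow k
    rw [pow_succ, pow_succ, Nat.cast_succ, add_one_mul]
    exact le_order_mul_sub_mul hgk hf ih hfg

theorem le_order_prod_sub_prod {ι : Type*} (s : Finset ι) {f g : ι → MvPowerSeries σ R}
    {a : ι → ℕ∞} {D : ℕ∞} (hf : ∀ i ∈ s, a i ≤ (f i).order) (hg : ∀ i ∈ s, a i ≤ (g i).order)
    (hfg : ∀ i ∈ s, a i + D ≤ (f i - g i).order) :
    ∑ i ∈ s, a i + D ≤ (∏ i ∈ s, f i - ∏ i ∈ s, g i).order := by
  classical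
  induction s using Finset.induction_on with
  | empty => simp
  | insert i s hi ih =>
    simp only [Finset.mem_insert, forall_eq_or_imp] at hf hg hfg
    have hprod : ∑ j ∈ s, a j ≤ (∏ j ∈ s, f j).order :=
      (Finset.sum_le_sum hf.2).trans (le_order_prod f s)
    rw [Finset.sum_insert hi, Finset.prod_insert hi, Finset.prod_insert hi]
    exact le_order_mul_sub_mul hg.1 hprod hfg.1 (ih hf.2 hg.2 hfg.2)

theorem le_order_prod_pow_sub_prod_pow {ι : Type*} [Fintype ι] {v w : ι → MvPowerSeries σ R}
    {D : ℕ∞} (hv : ∀ i, 1 ≤ (v i).order) (hw : ∀ i, 1 ≤ (w i).order)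
    (hvw : ∀ i, 1 + D ≤ (v i - w i).order) (m : ι →₀ ℕ) :
    m.degree + D ≤ (∏ i, v i ^ m i - ∏ i, w i ^ m i).order := by
  have hpow : ∀ i, (m i : ℕ∞) + D ≤ (v i ^ m i - w i ^ m i).order := fun i => by
    simpa using le_order_pow_sub_pow (hv i) (hw i) (hvw i) (m i)
  have hv' : ∀ i, (m i : ℕ∞) ≤ (v i ^ m i).order := fun i => by
    simpa using (nsmul_le_nsmul_right (hv i) (m i)).trans (le_order_pow (m i))
  have hw' : ∀ i, (m i : ℕ∞) ≤ (w i ^ m i).order := fun i => by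
    simpa using (nsmul_le_nsmul_right (hw i) (m i)).trans (le_order_pow (m i))
  simpa [degree_eq_sum] using le_order_prod_sub_prod Finset.univ (fun i _ => hv' i)
    (fun i _ => hw' i) (fun i _ => hpow i)

end MvPowerSeries

namespace FormalLinearization

variable {ν : ℕ}

theorem totalDeg_eq_degree (n : Fin ν →₀ ℕ) : totalDeg n = n.degree :=
  (degree_eq_sum n).symm

theorem mem_degLE {m : Fin ν →₀ ℕ} {K : ℕ} : m ∈ degLE ν K ↔ m.degree ≤ K := by
  rw [degLE, Finset.mem_filter, Finset.mem_Iic, totalDeg_eq_degree, and_iff_right_iff_imp]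
  intro hm i
  rw [degree_eq_sum] at hm
  simpa using (Finset.single_le_sum (fun j _ => Nat.zero_le (m j)) (Finset.mem_univ i)).trans hm

theorem coeff_Csub (v : Fin ν → PS ν) (φ : PS ν) (n : Fin ν →₀ ℕ) :
    coeff n (Csub v φ) =
      ∑ m ∈ degLE ν n.degree, coeff m φ * coeff n (∏ i, v i ^ m i) := by
  change coeff n (∑ m ∈ degLE ν (totalDeg n), coeff m φ • ∏ i, v i ^ m i) = _
  simp only [totalDeg_eq_degree, map_sum, coeff_smul]

theorem Csub_add (v : Fin ν → PS ν) (φ ψ : PS ν) : Csub v (φ + ψ) = Csub v φ + Csub v ψ := by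
  ext n
  simp only [coeff_Csub, map_add, add_mul, Finset.sum_add_distrib]

theorem Csub_smul (v : Fin ν → PS ν) (c : ℂ) (φ : PS ν) : Csub v (c • φ) = c • Csub v φ := by
  ext n
  simp only [coeff_Csub, coeff_smul, mul_assoc, Finset.mul_sum]

theorem Csub_X (v : Fin ν → PS ν) (i : Fin ν) (hv : constantCoeff (v i) = 0) :
    Csub v (X i) = v i := by
  ext n
  have hprod : ∏ j, v j ^ (single i 1 : Fin ν →₀ ℕ) j = v i := by
    rw [Finset.prod_eq_single i (fun j _ hj => by rw [single_eq_of_ne hj, pow_zero])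
      (by simp), single_eq_same, pow_one]
  simp only [coeff_Csub, coeff_X, ite_mul, one_mul, zero_mul, Finset.sum_ite_eq', mem_degLE,
    degree_single, hprod]
  split_ifs with hn
  · rfl
  · rw [(degree_eq_zero_iff n).mp (by omega), coeff_zero_eq_constantCoeff_apply, hv]

theorem coeff_Csub_of_degree_le_one (v : Fin ν → PS ν) {φ : PS ν} (hφ : 2 ≤ φ.order)
    {n : Fin ν →₀ ℕ} (hn : n.degree ≤ 1) : coeff n (Csub v φ) = 0 := by
  rw [coeff_Csub]
  refine Finset.sum_eq_zero fun m hm => ?_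
  have hm2 : (m.degree : ℕ∞) < φ.order :=
    lt_of_lt_of_le (by exact_mod_cast (mem_degLE.mp hm).trans_lt (by omega)) hφ
  rw [coeff_of_lt_order hm2, zero_mul]

theorem coeff_Csub_congr {v w : Fin ν → PS ν} (hv : ∀ j, constantCoeff (v j) = 0)
    (hw : ∀ j, constantCoeff (w j) = 0) {φ : PS ν} (hφ : 2 ≤ φ.order) {n : Fin ν →₀ ℕ}
    (hvw : ∀ j, (n.degree : ℕ∞) ≤ (v j - w j).order) :
    coeff n (Csub v φ) = coeff n (Csub w φ) := by
  rw [coeff_Csub, coeff_Csub]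
  refine Finset.sum_congr rfl fun m hm => ?_
  rw [mem_degLE] at hm
  by_cases hm1 : m.degree ≤ 1
  · have hm2 : (m.degree : ℕ∞) < φ.order :=
      lt_of_lt_of_le (by exact_mod_cast hm1.trans_lt (by omega)) hφ
    rw [coeff_of_lt_order hm2, zero_mul, zero_mul]
  · obtain ⟨D, hD⟩ : ∃ D, n.degree = 1 + D := ⟨n.degree - 1, by omega⟩
    have hdiff := le_order_prod_pow_sub_prod_pow
      (fun j => one_le_order_iff_constCoeff_eq_zero.mpr (hv j))
      (fun j => one_le_order_iff_constCoeff_eq_zero.mpr (hw j))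
      (fun j => by simpa [hD] using hvw j) m (D := D)
    have hlt : (n.degree : ℕ∞) < (∏ i, v i ^ m i - ∏ i, w i ^ m i).order :=
      lt_of_lt_of_le (by rw [hD]; exact_mod_cast (by omega)) hdiff
    rw [← sub_eq_zero, ← mul_sub, ← map_sub, coeff_of_lt_order hlt, mul_zero]

theorem coeff_X_mul_pd (j : Fin ν) (φ : PS ν) (n : Fin ν →₀ ℕ) :
    coeff n (X j * pd j φ) = n j * coeff n φ := by
  rw [X, coeff_monomial_mul, one_mul]
  split_ifs with h
  · have hn : n j = (n - single j 1 : Fin ν →₀ ℕ) j + 1 := by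
      rw [tsub_apply, single_eq_same]; have := single_le_iff.mp h; omega
    change (((n - single j 1 : Fin ν →₀ ℕ) j : ℂ) + 1) * coeff (n - single j 1 + single j 1) φ = _
    rw [tsub_add_cancel_of_le h, hn]
    push_cast
    ring
  · rw [show n j = 0 by by_contra h'; exact h (single_le_iff.mpr (by omega))]
    simp

theorem coeff_Lop (lam : Fin ν → ℂ) (φ : PS ν) (n : Fin ν →₀ ℕ) :
    coeff n (Lop lam φ) = weight lam n * coeff n φ := by
  simp only [Lop, smul_mul_assoc, map_sum, coeff_smul, coeff_X_mul_pd, weight_eq_sum,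
    nsmul_eq_mul, Finset.sum_mul]
  exact Finset.sum_congr rfl fun j _ => by ring

theorem weight_sub_ne_zero {lam : Fin ν → ℂ} (hres : NonResonantL lam) {n : Fin ν →₀ ℕ}
    (hn : 2 ≤ n.degree) (i : Fin ν) : weight lam n - lam i ≠ 0 := by
  rw [sub_ne_zero, weight_eq_sum]
  simpa [nsmul_eq_mul, eq_comm] using hres i n (by simpa [degree_eq_sum] using hn)

theorem Lop_eq_Csub_iff (lam : Fin ν → ℂ) {g : Fin ν → PS ν}
    (hg : ∀ j, constantCoeff (g j) = 0) (i : Fin ν) (φ : PS ν) :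
    Lop lam (g i) = Csub g (lam i • X i + φ) ↔
      ∀ n, (weight lam n - lam i) * coeff n (g i) = coeff n (Csub g φ) := by
  rw [Csub_add, Csub_smul, Csub_X g i (hg i), MvPowerSeries.ext_iff]
  refine forall_congr' fun n => ?_
  rw [coeff_Lop, map_add, coeff_smul, sub_mul]
  constructor <;> intro h <;> linear_combination h

theorem TangentToId.coeff_eq {g : Fin ν → PS ν} (hg : TangentToId g) (i : Fin ν)
    {n : Fin ν →₀ ℕ} (hn : n.degree ≤ 1) : coeff n (g i) = coeff n (X i) := by
  rw [← sub_eq_zero, ← map_sub]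
  exact coeff_of_lt_order (lt_of_lt_of_le (by exact_mod_cast (by omega : n.degree < 2)) (hg i))

theorem TangentToId.constantCoeff_eq_zero {g : Fin ν → PS ν} (hg : TangentToId g) (i : Fin ν) :
    constantCoeff (g i) = 0 := by
  rw [← coeff_zero_eq_constantCoeff_apply, TangentToId.coeff_eq hg i (by simp), coeff_X, if_neg]
  exact (single_ne_zero.mpr one_ne_zero).symm

theorem tangentToId_of_coeff_eq {g : Fin ν → PS ν}
    (hg : ∀ i (n : Fin ν →₀ ℕ), n.degree ≤ 1 → coeff n (g i) = coeff n (X i)) :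
    TangentToId g := fun i =>
  le_order fun n hn => by
    rw [map_sub, sub_eq_zero, hg i n (Nat.lt_succ_iff.mp (by exact_mod_cast hn))]

theorem TangentToId.weight_sub_mul_coeff {g : Fin ν → PS ν} (hg : TangentToId g)
    (lam : Fin ν → ℂ) (i : Fin ν) {n : Fin ν →₀ ℕ} (hn : n.degree ≤ 1) :
    (weight lam n - lam i) * coeff n (g i) = 0 := by
  rw [TangentToId.coeff_eq hg i hn, coeff_X]
  split_ifs with h
  · rw [h, weight_single, one_smul, sub_self, zero_mul]
  · rw [mul_zero]

/-- Truncating to degrees `< |n|` makes the recursion well founded without changing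
`[aᵢ ∘ h]ₙ` (see `coeff_linearizer`). -/
def linCoeff (lam : Fin ν → ℂ) (a : Fin ν → PS ν) (n : Fin ν →₀ ℕ) (i : Fin ν) : ℂ :=
  if n.degree ≤ 1 then coeff n (X i)
  else
    coeff n (Csub (fun j q => if q.degree < n.degree then linCoeff lam a q j else 0) (a i)) /
      (weight lam n - lam i)
termination_by n.degree

def linearizer (lam : Fin ν → ℂ) (a : Fin ν → PS ν) : Fin ν → PS ν :=
  fun i n => linCoeff lam a n i

theorem coeff_linearizer_of_degree_le_one (lam : Fin ν → ℂ) (a : Fin ν → PS ν) (i : Fin ν)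
    {n : Fin ν →₀ ℕ} (hn : n.degree ≤ 1) : coeff n (linearizer lam a i) = coeff n (X i) := by
  change linCoeff lam a n i = _
  rw [linCoeff, if_pos hn]

theorem tangentToId_linearizer (lam : Fin ν → ℂ) (a : Fin ν → PS ν) :
    TangentToId (linearizer lam a) :=
  tangentToId_of_coeff_eq fun i _ => coeff_linearizer_of_degree_le_one lam a i

theorem coeff_linearizer (lam : Fin ν → ℂ) {a : Fin ν → PS ν} (ha : ∀ i, 2 ≤ (a i).order)
    (i : Fin ν) {n : Fin ν →₀ ℕ} (hn : 2 ≤ n.degree) :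
    coeff n (linearizer lam a i) =
      coeff n (Csub (linearizer lam a) (a i)) / (weight lam n - lam i) := by
  set h := linearizer lam a
  set htrunc : Fin ν → PS ν := fun j q => if q.degree < n.degree then coeff q (h j) else 0
  have hh0 : ∀ j, constantCoeff (h j) = 0 :=
    TangentToId.constantCoeff_eq_zero (tangentToId_linearizer lam a)
  have htrunc0 : ∀ j, constantCoeff (htrunc j) = 0 := fun j => by
    rw [← hh0 j, ← coeff_zero_eq_constantCoeff_apply, ← coeff_zero_eq_constantCoeff_apply]
    exact if_pos (by rw [map_zero]; omega)
  have hclose : ∀ j, (n.degree : ℕ∞) ≤ (htrunc j - h j).order := fun j =>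
    le_order fun q hq => by
      rw [map_sub, sub_eq_zero]
      exact if_pos (by exact_mod_cast hq)
  change linCoeff lam a n i = _
  rw [linCoeff, if_neg (by omega)]
  exact congrArg (· / _) (coeff_Csub_congr htrunc0 hh0 (ha i) hclose)

theorem weight_sub_mul_coeff_linearizer {lam : Fin ν → ℂ} (hres : NonResonantL lam) {a : Fin ν → PS ν}
    (ha : ∀ i, 2 ≤ (a i).order) (i : Fin ν) (n : Fin ν →₀ ℕ) :
    (weight lam n - lam i) * coeff n (linearizer lam a i) =
      coeff n (Csub (linearizer lam a) (a i)) := by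
  by_cases hn : n.degree ≤ 1
  · rw [TangentToId.weight_sub_mul_coeff (tangentToId_linearizer lam a) lam i hn,
      coeff_Csub_of_degree_le_one _ (ha i) hn]
  · rw [coeff_linearizer lam ha i (by omega),
      mul_div_cancel₀ _ (weight_sub_ne_zero hres (by omega) i)]

theorem eq_of_tangentToId {lam : Fin ν → ℂ} (hres : NonResonantL lam) {a : Fin ν → PS ν}
    (ha : ∀ i, 2 ≤ (a i).order) {g h : Fin ν → PS ν} (hg : TangentToId g) (hh : TangentToId h)
    (hg_eq : ∀ i n, (weight lam n - lam i) * coeff n (g i) = coeff n (Csub g (a i)))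
    (hh_eq : ∀ i n, (weight lam n - lam i) * coeff n (h i) = coeff n (Csub h (a i))) :
    g = h := by
  suffices key : ∀ d (n : Fin ν →₀ ℕ), n.degree = d → ∀ i, coeff n (g i) = coeff n (h i) from
    funext fun i => MvPowerSeries.ext fun n => key _ n rfl i
  intro d
  induction d using Nat.strong_induction_on with
  | _ d ih =>
    intro n hd i
    by_cases hn : n.degree ≤ 1
    · rw [TangentToId.coeff_eq hg i hn, TangentToId.coeff_eq hh i hn]
    have hclose : ∀ j, (n.degree : ℕ∞) ≤ (g j - h j).order := fun j =>
      le_order fun q hq => by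
        rw [map_sub, sub_eq_zero]
        exact ih _ (hd ▸ (by exact_mod_cast hq)) q rfl j
    have hcomp := coeff_Csub_congr (TangentToId.constantCoeff_eq_zero hg)
      (TangentToId.constantCoeff_eq_zero hh) (ha i) hclose
    refine mul_left_cancel₀ (weight_sub_ne_zero hres (n := n) (by omega) i) ?_
    rw [hg_eq, hh_eq, hcomp]

end FormalLinearization

open FormalLinearization in
/-- For a non-resonant `λ ∈ ℂ^ν` and a nonlinear part `a` with `ord aᵢ ≥ 2`, there is a
unique tangent-to-identity formal diffeomorphism `h` with
`∑ⱼ λⱼ zⱼ ∂hᵢ/∂zⱼ = Vᵢ ∘ h` for each `i`, where `Vᵢ = λᵢ zᵢ + aᵢ`; that is, `h` formally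
conjugates the vector field `V = V_λ + a` to its linear part `V_λ`. -/
theorem formal_linearization_vf (ν : ℕ) (lam : Fin ν → ℂ)
    (hres : NonResonantL lam)
    (a : Fin ν → PS ν) (ha : ∀ i, 2 ≤ (a i).order) :
    ∃! h : Fin ν → PS ν, TangentToId h ∧
      ∀ i, Lop lam (h i) = Csub h (lam i • MvPowerSeries.X i + a i) := by
  have hsolves : ∀ {g : Fin ν → PS ν}, TangentToId g →
      ((∀ i, Lop lam (g i) = Csub g (lam i • X i + a i)) ↔
        ∀ i n, (weight lam n - lam i) * coeff n (g i) = coeff n (Csub g (a i))) :=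
    fun hg => forall_congr' fun i =>
      Lop_eq_Csub_iff lam (TangentToId.constantCoeff_eq_zero hg) i (a i)
  refine ⟨linearizer lam a, ⟨tangentToId_linearizer lam a, ?_⟩, ?_⟩
  · exact (hsolves (tangentToId_linearizer lam a)).mpr (weight_sub_mul_coeff_linearizer hres ha)
  · rintro g ⟨hg, hg_eq⟩
    exact eq_of_tangentToId hres ha hg (tangentToId_linearizer lam a)
      ((hsolves hg).mp hg_eq) (weight_sub_mul_coeff_linearizer hres ha)
end
end

section
/- For every z ∈ ℂ with |Re z| ≤ 1/2 and |Im z| ≤ 1/2, one has |e^{2πiz} − 1| ≥ |z|. -/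
/-!
Write `w = 2πiz`. Then `|e^w - 1|² = (e^{Re w} - 1)² + 4 e^{Re w} sin²(Im w / 2)`, with
`Re w = -2π Im z` and `Im w / 2 = π Re z`. Jordan's inequality gives `sin²(π Re z) ≥ 4 (Re z)²`,
and convexity of `exp` gives `(e^{-2π Im z} - 1)² ≥ (Im z)²`. If `e^{Re w} ≥ 1/4` these two
bounds add up to `|z|²`; otherwise `(e^{Re w} - 1)²` alone exceeds `1/2 ≥ |z|²`.
-/

open Complex

theorem Complex.norm_exp_sub_one_sq (w : ℂ) :
    ‖exp w - 1‖ ^ 2 =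
      (Real.exp w.re - 1) ^ 2 + 4 * Real.exp w.re * Real.sin (w.im / 2) ^ 2 := by
  have half_angle : Real.cos w.im = 1 - 2 * Real.sin (w.im / 2) ^ 2 := by
    have h := Real.cos_two_mul (w.im / 2)
    rw [show 2 * (w.im / 2) = w.im by ring] at h
    linear_combination h + 2 * Real.cos_sq' (w.im / 2)
  rw [Complex.sq_norm, normSq_apply, sub_re, sub_im, exp_re, exp_im, one_re, one_im]
  linear_combination
    Real.exp w.re ^ 2 * Real.sin_sq_add_cos_sq w.im - 2 * Real.exp w.re * half_angle

namespace Real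

theorem two_mul_abs_le_abs_sin_pi_mul {x : ℝ} (hx : |x| ≤ 1 / 2) :
    2 * |x| ≤ |sin (π * x)| := by
  have hπx : |π * x| = π * |x| := by rw [abs_mul, abs_of_pos pi_pos]
  have := mul_abs_le_abs_sin (x := π * x) (by rw [hπx]; nlinarith [pi_pos])
  rwa [hπx, ← mul_assoc, div_mul_cancel₀ _ pi_ne_zero] at this

theorem abs_le_abs_exp_two_pi_mul_sub_one {y : ℝ} (hy : |y| ≤ 1 / 2) :
    |y| ≤ |exp (2 * π * y) - 1| := by
  rcases le_or_gt 0 y with hy₀ | hy₀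
  · have := add_one_le_exp (2 * π * y)
    rw [abs_of_nonneg hy₀, abs_of_nonneg (by nlinarith [pi_gt_three])]
    nlinarith [pi_gt_three]
  · -- `exp (2πy) ≤ 1 / (1 - 2πy) ≤ 1 + y`, the second step because `2π (1 + y) ≥ π > 1`
    have h_inv : exp (2 * π * y) * (1 - 2 * π * y) ≤ 1 := by
      have hprod : exp (2 * π * y) * exp (-(2 * π * y)) = 1 := by
        rw [← exp_add, add_neg_cancel, exp_zero]
      nlinarith [add_one_le_exp (-(2 * π * y)), exp_pos (2 * π * y)]
    have h_one_add : 1 ≤ (1 + y) * (1 - 2 * π * y) := by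
      have h_factor : 0 ≤ 2 * π * (1 + y) - 1 := by nlinarith [(abs_le.1 hy).1, pi_gt_three]
      nlinarith [mul_nonneg (neg_nonneg.2 hy₀.le) h_factor]
    have hpos : 0 < 1 - 2 * π * y := by nlinarith [pi_pos]
    have hle : exp (2 * π * y) ≤ 1 + y := le_of_mul_le_mul_right (h_inv.trans h_one_add) hpos
    rw [abs_of_neg hy₀, abs_of_nonpos (by linarith)]
    linarith

end Real

theorem sq_add_sq_le_sub_one_sq_add_four_mul_sq {r s x y : ℝ} (hr : 0 < r)
    (hx : 2 * |x| ≤ |s|) (hy : |y| ≤ |r - 1|) (hx' : |x| ≤ 1 / 2) (hy' : |y| ≤ 1 / 2) :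
    x ^ 2 + y ^ 2 ≤ (r - 1) ^ 2 + 4 * r * s ^ 2 := by
  have hxs : (2 * x) ^ 2 ≤ s ^ 2 := sq_le_sq.2 (by rwa [abs_mul, abs_two])
  have hyr : y ^ 2 ≤ (r - 1) ^ 2 := sq_le_sq.2 hy
  have hx2 : x ^ 2 ≤ 1 / 4 := by nlinarith [sq_abs x, abs_nonneg x]
  have hy2 : y ^ 2 ≤ 1 / 4 := by nlinarith [sq_abs y, abs_nonneg y]
  rcases le_or_gt (1 / 4) r with hr' | hr' <;> nlinarith [sq_nonneg s]

/-- For every `z ∈ ℂ` with `|Re z| ≤ 1/2` and `|Im z| ≤ 1/2`, one has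
`|e^{2πiz} - 1| ≥ |z|`. -/
theorem abs_le_abs_exp_two_pi_I_sub_one (z : ℂ)
    (hre : |z.re| ≤ 1 / 2) (him : |z.im| ≤ 1 / 2) :
    ‖z‖ ≤ ‖Complex.exp (2 * Real.pi * Complex.I * z) - 1‖ := by
  set w := 2 * Real.pi * I * z
  have hw_re : w.re = 2 * Real.pi * (-z.im) := by simp [w]
  have hw_im : w.im / 2 = Real.pi * z.re := by simp [w]; ring
  refine (pow_le_pow_iff_left₀ (norm_nonneg _) (norm_nonneg _) two_ne_zero).1 ?_
  rw [Complex.norm_exp_sub_one_sq, hw_re, hw_im, Complex.sq_norm, normSq_apply, ← sq, ← sq]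
  refine sq_add_sq_le_sub_one_sq_add_four_mul_sq (Real.exp_pos _)
    (Real.two_mul_abs_le_abs_sin_pi_mul hre) ?_ hre him
  simpa using Real.abs_le_abs_exp_two_pi_mul_sub_one (y := -z.im) (by rwa [abs_neg])
end
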